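/- For every in-semicomplete digraph D and every positive integer k, χ_k(D) ≤ λ_k(D) (the dual Linial Conjecture holds for in-semicomplete digraphs). -/

import Mathlib

/-!
Induction on `|V|`. Let `P` be an optimal `k`-pack. If `P` covers `V`, coloring by singletons
gives `χ_k ≤ |V| = λ_k`. Otherwise note that in an in-semicomplete digraph two disjoint paths
whose ends are joined by an arc can be merged into one path on the same vertices (interleave them
backwards from the common final vertex). So the ends of `P` may be assumed pairwise nonadjacent;
`P` then has exactly `k` paths, and a maximum stable set `S` has at least `k` vertices.

Coloring `D - S` and adding `S` as a class gives `χ_k(D) ≤ k + χ_k(D - S)`. Conversely, a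
`k`-pack of `D - S` with pairwise nonadjacent ends can be augmented by `k` vertices of `S`. By
maximality every end `t` has a neighbour in `S`: either an out-neighbour `s`, and the path is
extended by `s`, or a unique in-neighbour `s`, and the path is merged into the one-vertex path `s`.
No two ends share an out-neighbour (they would be adjacent) or such an in-neighbour (exchanging it
for both would enlarge `S`); two paths of different kinds attached to the same `s` are merged
through `s`. Hence `λ_k(D - S) + k ≤ λ_k(D)`, and induction concludes.
-/

open scoped Classical

namespace DigraphPaper

variable {V : Type*} [Fintype V] [DecidableEq V]

/-- Vertices `u` and `v` are adjacent in the digraph with arc relation `A`. -/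
def DAdj (A : V → V → Prop) (u v : V) : Prop := A u v ∨ A v u

/-- A set of vertices is stable if its vertices are pairwise nonadjacent. -/
def DStable (A : V → V → Prop) (S : Set V) : Prop :=
  ∀ u ∈ S, ∀ v ∈ S, u ≠ v → ¬ DAdj A u v

/-- The in-neighborhood of every vertex induces a semicomplete digraph. -/
def InSemicomplete (A : V → V → Prop) : Prop :=
  ∀ v u w : V, A u v → A w v → u ≠ w → DAdj A u w

/-- The out-neighborhood of every vertex induces a semicomplete digraph. -/
def OutSemicomplete (A : V → V → Prop) : Prop :=
  ∀ v u w : V, A v u → A v w → u ≠ w → DAdj A u w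

/-- A path: a nonempty list of distinct vertices with consecutive arcs. -/
def IsPath (A : V → V → Prop) (p : List V) : Prop :=
  p ≠ [] ∧ p.Nodup ∧ p.Chain' A

/-- A collection of pairwise vertex-disjoint lists. -/
def PDisjoint (P : Finset (List V)) : Prop :=
  ∀ p ∈ P, ∀ q ∈ P, p ≠ q → ∀ x : V, x ∈ p → x ∉ q

/-- A path partition: vertex-disjoint paths covering all vertices. -/
def IsPathPartition (A : V → V → Prop) (P : Finset (List V)) : Prop :=
  (∀ p ∈ P, IsPath A p) ∧ PDisjoint P ∧ ∀ v : V, ∃ p ∈ P, v ∈ p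

/-- The k-norm of a collection of paths. -/
def knorm (k : ℕ) (P : Finset (List V)) : ℕ := ∑ p ∈ P, min p.length k

/-- The set of final vertices of the paths in `P`. -/
def pends (P : Finset (List V)) : Set V := {x | ∃ p ∈ P, p.getLast? = some x}

/-- A partial k-coloring: k pairwise disjoint stable sets. -/
def IsPartialKColoring (A : V → V → Prop) (k : ℕ) (C : Fin k → Finset V) : Prop :=
  (∀ i, DStable A (C i : Set V)) ∧ ∀ i j, i ≠ j → Disjoint (C i) (C j)

/-- Orthogonality of a partial k-coloring to a path partition:
each path meets `min |P| k` distinct color classes. -/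
def OrthoPC (k : ℕ) (C : Fin k → Finset V) (P : Finset (List V)) : Prop :=
  ∀ p ∈ P, min p.length k ≤ (Finset.univ.filter fun i : Fin k => ∃ x ∈ p, x ∈ C i).card

/-- A k-optimal path partition. -/
def KOptimal (A : V → V → Prop) (k : ℕ) (P : Finset (List V)) : Prop :=
  IsPathPartition A P ∧
    ∀ Q : Finset (List V), IsPathPartition A Q → knorm k P ≤ knorm k Q

/-- A k-pack: at most k vertex-disjoint paths. -/
def IsKPack (A : V → V → Prop) (k : ℕ) (P : Finset (List V)) : Prop :=
  P.card ≤ k ∧ (∀ p ∈ P, IsPath A p) ∧ PDisjoint P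

/-- Weight of a k-pack: number of covered vertices. -/
def weight (P : Finset (List V)) : ℕ := ∑ p ∈ P, p.length

/-- The set of vertices covered by the paths of `P`. -/
def cover (P : Finset (List V)) : Finset V := P.biUnion List.toFinset

/-- An optimal k-pack. -/
def OptimalKPack (A : V → V → Prop) (k : ℕ) (P : Finset (List V)) : Prop :=
  IsKPack A k P ∧ ∀ Q : Finset (List V), IsKPack A k Q → weight Q ≤ weight P

/-- A coloring: a partition of the vertex set into stable sets. -/
def IsColoring (A : V → V → Prop) (C : Finset (Finset V)) : Prop :=
  (∀ c ∈ C, DStable A (c : Set V)) ∧ (∀ c ∈ C, c.Nonempty) ∧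
  (∀ c ∈ C, ∀ c' ∈ C, c ≠ c' → Disjoint c c') ∧ ∀ v : V, ∃ c ∈ C, v ∈ c

/-- Orthogonality of a coloring to a k-pack:
each color class meets `min |C| k` distinct paths. -/
def OrthoCP (k : ℕ) (C : Finset (Finset V)) (P : Finset (List V)) : Prop :=
  ∀ c ∈ C, min c.card k ≤ (P.filter fun p => ∃ x ∈ c, x ∈ p).card

/-- π_k(D): minimum k-norm of a path partition. -/
noncomputable def pik (A : V → V → Prop) (k : ℕ) : ℕ :=
  sInf {n | ∃ P : Finset (List V), IsPathPartition A P ∧ knorm k P = n}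

/-- α_k(D): maximum weight of a partial k-coloring. -/
noncomputable def alphak (A : V → V → Prop) (k : ℕ) : ℕ :=
  sSup {n | ∃ C : Fin k → Finset V, IsPartialKColoring A k C ∧ ∑ i, (C i).card = n}

/-- π(D): minimum number of paths in a path partition. -/
noncomputable def piNum (A : V → V → Prop) : ℕ :=
  sInf {n | ∃ P : Finset (List V), IsPathPartition A P ∧ P.card = n}

/-- α(D): maximum size of a stable set. -/
noncomputable def alphaNum (A : V → V → Prop) : ℕ :=
  sSup {n | ∃ S : Finset V, DStable A (S : Set V) ∧ S.card = n}

/-- k-norm of a coloring. -/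
def cnorm (k : ℕ) (C : Finset (Finset V)) : ℕ := ∑ c ∈ C, min c.card k

/-- χ_k(D): minimum k-norm of a coloring. -/
noncomputable def chik (A : V → V → Prop) (k : ℕ) : ℕ :=
  sInf {n | ∃ C : Finset (Finset V), IsColoring A C ∧ cnorm k C = n}

/-- λ_k(D): maximum weight of a k-pack. -/
noncomputable def lamk (A : V → V → Prop) (k : ℕ) : ℕ :=
  sSup {n | ∃ P : Finset (List V), IsKPack A k P ∧ weight P = n}

end DigraphPaper

namespace DigraphPaper

section Paths

variable {V : Type*} {A : V → V → Prop}

theorem InSemicomplete.outSemicomplete_swap (hin : InSemicomplete A) :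
    OutSemicomplete fun a b => A b a :=
  fun v u w huv hwv hne => (hin v u w huv hwv hne).symm

theorem InSemicomplete.comap {W : Type*} (hin : InSemicomplete A) {f : W → V}
    (hf : Function.Injective f) : InSemicomplete fun a b => A (f a) (f b) :=
  fun v u w huv hwv hne => hin (f v) (f u) (f w) huv hwv (hf.ne hne)

/-- Interleave the two paths, always continuing with whichever of the two current heads
dominates the other. -/
theorem exists_perm_isChain_cons_of_outSemicomplete {B : V → V → Prop}
    (hB : OutSemicomplete B) :
    ∀ {y : V} {p q : List V}, (y :: (p ++ q)).Nodup → (y :: p).IsChain B →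
      (y :: q).IsChain B → ∃ r, r.Perm (p ++ q) ∧ (y :: r).IsChain B
  | _, [], q, _, _, hq => ⟨q, .rfl, hq⟩
  | _, p, [], _, hp, _ => ⟨p, by simp, hp⟩
  | y, u :: p, w :: q, hnd, hp, hq => by
    rw [List.isChain_cons_cons] at hp hq
    have hnd' : (u :: (p ++ w :: q)).Nodup := hnd.of_cons
    have huw : u ≠ w := fun h => (List.nodup_cons.1 hnd').1 (by simp [h])
    rcases hB y u w hp.1 hq.1 huw with huw' | hwu
    · obtain ⟨r, hr, hc⟩ := exists_perm_isChain_cons_of_outSemicomplete hB hnd' hp.2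
        (List.isChain_cons_cons.2 ⟨huw', hq.2⟩)
      exact ⟨u :: r, hr.cons u, List.isChain_cons_cons.2 ⟨hp.1, hc⟩⟩
    · have hnd'' : (w :: (q ++ u :: p)).Nodup :=
        (List.perm_append_comm (l₁ := u :: p) (l₂ := w :: q)).nodup_iff.1 hnd'
      obtain ⟨r, hr, hc⟩ := exists_perm_isChain_cons_of_outSemicomplete hB hnd'' hq.2
        (List.isChain_cons_cons.2 ⟨hwu, hp.2⟩)
      exact ⟨w :: r, (hr.cons w).trans (List.perm_append_comm (l₁ := w :: q) (l₂ := u :: p)),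
        List.isChain_cons_cons.2 ⟨hq.1, hc⟩⟩
termination_by _ p q => p.length + q.length

theorem exists_perm_isChain_append_singleton (hin : InSemicomplete A) {p q : List V} {y : V}
    (hnd : (p ++ q ++ [y]).Nodup) (hp : (p ++ [y]).IsChain A) (hq : (q ++ [y]).IsChain A) :
    ∃ r, r.Perm (p ++ q) ∧ (r ++ [y]).IsChain A := by
  have hrev : ∀ l : List V, (l ++ [y]).IsChain A ↔ (y :: l.reverse).IsChain fun a b => A b a :=
    fun l => by rw [← List.isChain_reverse]; simp
  have hnd' : (y :: (p.reverse ++ q.reverse)).Nodup := by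
    refine ((List.perm_append_singleton _ _).trans ?_).nodup_iff.1 hnd
    exact ((List.reverse_perm p).append (List.reverse_perm q)).symm.cons y
  obtain ⟨r, hr, hc⟩ := exists_perm_isChain_cons_of_outSemicomplete hin.outSemicomplete_swap
    hnd' ((hrev p).1 hp) ((hrev q).1 hq)
  refine ⟨r.reverse, (List.reverse_perm r).trans
    (hr.trans ((List.reverse_perm p).append (List.reverse_perm q))), ?_⟩
  rwa [hrev, List.reverse_reverse]

theorem IsPath.exists_merge (hin : InSemicomplete A) {p q : List V} (hp : IsPath A p)
    (hq : IsPath A q) (hpq : ∀ x ∈ p, x ∉ q)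
    (harc : ∀ x ∈ p.getLast?, ∀ y ∈ q.getLast?, A x y) :
    ∃ m, m.Perm (p ++ q) ∧ IsPath A m ∧ m.getLast? = q.getLast? := by
  obtain ⟨q, y, rfl⟩ := (List.eq_nil_or_concat' q).resolve_left hq.1
  have hnd : (p ++ q ++ [y]).Nodup := by
    rw [List.append_assoc]
    exact List.nodup_append.2 ⟨hp.2.1, hq.2.1, fun a ha b hb hab => hpq a ha (hab ▸ hb)⟩
  have hpy : (p ++ [y]).IsChain A := by
    refine List.isChain_append.2 ⟨hp.2.2, List.isChain_singleton y, fun x hx b hb => ?_⟩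
    simp only [List.head?_cons, Option.mem_some_iff] at hb
    simpa [← hb] using harc x hx
  obtain ⟨r, hr, hc⟩ := exists_perm_isChain_append_singleton hin hnd hpy hq.2.2
  have hperm : (r ++ [y]).Perm (p ++ (q ++ [y])) := by
    rw [← List.append_assoc]
    exact hr.append_right [y]
  refine ⟨r ++ [y], hperm, ⟨by simp, hperm.nodup_iff.2 ?_, hc⟩, by simp⟩
  rwa [← List.append_assoc]

theorem isPath_singleton (s : V) : IsPath A [s] :=
  ⟨List.cons_ne_nil s [], List.nodup_singleton s, List.isChain_singleton s⟩

theorem IsPath.exists_getLast? {p : List V} (hp : IsPath A p) : ∃ t, p.getLast? = some t :=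
  Option.isSome_iff_exists.1 (List.getLast?_isSome.2 hp.1)

def IsPack (A : V → V → Prop) (P : Finset (List V)) : Prop :=
  (∀ p ∈ P, IsPath A p) ∧ PDisjoint P

theorem IsKPack.isPack {k : ℕ} {P : Finset (List V)} (hP : IsKPack A k P) : IsPack A P :=
  hP.2

theorem IsPack.mono {P Q : Finset (List V)} (hP : IsPack A P) (hQ : Q ⊆ P) : IsPack A Q :=
  ⟨fun p hp => hP.1 p (hQ hp), fun p hp q hq => hP.2 p (hQ hp) q (hQ hq)⟩

end Paths

section Packs

variable {V : Type*} [DecidableEq V] {A : V → V → Prop} {P F G : Finset (List V)}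

theorem pDisjoint_iff_pairwiseDisjoint :
    PDisjoint P ↔ (P : Set (List V)).PairwiseDisjoint List.toFinset := by
  simp only [PDisjoint, Set.PairwiseDisjoint, Set.Pairwise, Function.onFun, Finset.disjoint_left,
    List.mem_toFinset, Finset.mem_coe]

theorem mem_cover {x : V} : x ∈ cover P ↔ ∃ p ∈ P, x ∈ p := by
  simp [cover]

theorem cover_insert (p : List V) (P : Finset (List V)) :
    cover (insert p P) = p.toFinset ∪ cover P :=
  Finset.biUnion_insert

theorem cover_singleton (p : List V) : cover {p} = p.toFinset :=
  Finset.singleton_biUnion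

theorem cover_union : cover (F ∪ G) = cover F ∪ cover G :=
  Finset.union_biUnion

theorem cover_mono (h : F ⊆ G) : cover F ⊆ cover G :=
  Finset.biUnion_subset_biUnion_of_subset_left _ h

theorem IsPack.weight_eq_card_cover (hP : IsPack A P) : weight P = (cover P).card := by
  rw [cover, Finset.card_biUnion (pDisjoint_iff_pairwiseDisjoint.1 hP.2), weight]
  exact Finset.sum_congr rfl fun p hp => (List.toFinset_card_of_nodup (hP.1 p hp).2.1).symm

theorem IsPack.disjoint_cover (hP : IsPack A P) (hF : F ⊆ P) (hG : G ⊆ P)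
    (hFG : Disjoint F G) : Disjoint (cover F) (cover G) := by
  simp only [Finset.disjoint_left, mem_cover]
  rintro x ⟨p, hp, hxp⟩ ⟨q, hq, hxq⟩
  exact hP.2 p (hF hp) q (hG hq) (fun h => Finset.disjoint_left.1 hFG hp (h ▸ hq)) x hxp hxq

theorem IsPack.eq_of_getLast?_eq (hP : IsPack A P) {p q : List V} (hp : p ∈ P) (hq : q ∈ P)
    {t : V} (hpt : p.getLast? = some t) (hqt : q.getLast? = some t) : p = q := by
  by_contra hpq
  exact hP.2 p hp q hq hpq t (List.mem_of_getLast? hpt) (List.mem_of_getLast? hqt)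

theorem IsPack.insert_of_disjoint {p : List V} (hP : IsPack A P) (hp : IsPath A p)
    (hdisj : ∀ q ∈ P, p ≠ q → Disjoint p.toFinset q.toFinset) : IsPack A (insert p P) := by
  refine ⟨fun q hq => ?_, ?_⟩
  · rcases Finset.mem_insert.1 hq with rfl | hq
    exacts [hp, hP.1 q hq]
  · rw [pDisjoint_iff_pairwiseDisjoint, Finset.coe_insert, Set.pairwiseDisjoint_insert]
    exact ⟨pDisjoint_iff_pairwiseDisjoint.1 hP.2, hdisj⟩

theorem isPack_image {ι : Type*} {W : Finset ι} {m : ι → List V} (hm : ∀ i ∈ W, IsPath A (m i))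
    (hdisj : (W : Set ι).PairwiseDisjoint fun i => (m i).toFinset) :
    IsPack A (W.image m) ∧ (W.image m).card = W.card := by
  have hinj : Set.InjOn m W := by
    intro i hi j hj hij
    by_contra hne
    have := hdisj hi hj hne
    simp only [Function.onFun, hij, Finset.disjoint_self_iff_empty,
      List.toFinset_eq_empty_iff] at this
    exact (hm j hj).1 this
  refine ⟨⟨fun p hp => ?_, fun p hp q hq hpq x hxp hxq => ?_⟩, Finset.card_image_of_injOn hinj⟩
  · obtain ⟨i, hi, rfl⟩ := Finset.mem_image.1 hp
    exact hm i hi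
  · obtain ⟨i, hi, rfl⟩ := Finset.mem_image.1 hp
    obtain ⟨j, hj, rfl⟩ := Finset.mem_image.1 hq
    exact Finset.disjoint_left.1 (hdisj hi hj fun h => hpq (h ▸ rfl))
      (List.mem_toFinset.2 hxp) (List.mem_toFinset.2 hxq)

theorem IsPack.exists_card_lt_of_arc (hin : InSemicomplete A) (hP : IsPack A P) {p q : List V}
    (hp : p ∈ P) (hq : q ∈ P) (hpq : p ≠ q)
    (harc : ∀ x ∈ p.getLast?, ∀ y ∈ q.getLast?, A x y) :
    ∃ P', IsPack A P' ∧ P'.card < P.card ∧ cover P' = cover P := by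
  obtain ⟨m, hm, hmpath, -⟩ :=
    (hP.1 p hp).exists_merge hin (hP.1 q hq) (hP.2 p hp q hq hpq) harc
  have hmset : m.toFinset = p.toFinset ∪ q.toFinset := by
    rw [List.toFinset_eq_of_perm _ _ hm, List.toFinset_append]
  set P₀ := (P.erase p).erase q
  have hq' : q ∈ P.erase p := Finset.mem_erase.2 ⟨hpq.symm, hq⟩
  have hP₀ : P = insert p (insert q P₀) := by
    rw [Finset.insert_erase hq', Finset.insert_erase hp]
  have hP₀P : P₀ ⊆ P := (Finset.erase_subset _ _).trans (Finset.erase_subset _ _)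
  refine ⟨insert m P₀, (hP.mono hP₀P).insert_of_disjoint hmpath fun r hr _ => ?_, ?_, ?_⟩
  · have hrp : r ≠ p := fun h => by simp [P₀, h] at hr
    have hrq : r ≠ q := fun h => by simp [P₀, h] at hr
    rw [hmset, Finset.disjoint_union_left]
    exact ⟨pDisjoint_iff_pairwiseDisjoint.1 hP.2 hp (hP₀P hr) hrp.symm,
      pDisjoint_iff_pairwiseDisjoint.1 hP.2 hq (hP₀P hr) hrq.symm⟩
  · calc (insert m P₀).card ≤ P₀.card + 1 := Finset.card_insert_le _ _
      _ < P.card := by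
        rw [Finset.card_erase_of_mem hq', Finset.card_erase_of_mem hp]
        have : 1 < P.card := Finset.one_lt_card.2 ⟨p, hp, q, hq, hpq⟩
        omega
  · conv_rhs => rw [hP₀]
    rw [cover_insert, cover_insert, cover_insert, hmset, Finset.union_assoc]

def ends (P : Finset (List V)) : Finset V := P.biUnion fun p => p.getLast?.toFinset

theorem mem_ends {x : V} : x ∈ ends P ↔ ∃ p ∈ P, p.getLast? = some x := by
  simp [ends]

theorem IsPack.card_ends (hP : IsPack A P) : (ends P).card = P.card := by
  rw [ends, Finset.card_biUnion, Finset.card_eq_sum_ones]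
  · refine Finset.sum_congr rfl fun p hp => ?_
    obtain ⟨p, y, rfl⟩ := (List.eq_nil_or_concat' p).resolve_left (hP.1 _ hp).1
    simp
  · intro p hp q hq hpq
    simp only [Function.onFun, Finset.disjoint_left, Option.mem_toFinset, Option.mem_def]
    exact fun x hxp hxq =>
      hP.2 p hp q hq hpq x (List.mem_of_getLast? hxp) (List.mem_of_getLast? hxq)

theorem IsPack.exists_dStable_ends (hin : InSemicomplete A) (hP : IsPack A P) :
    ∃ R, IsPack A R ∧ R.card ≤ P.card ∧ cover R = cover P ∧ DStable A ↑(ends R) := by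
  induction hn : P.card using Nat.strong_induction_on generalizing P with
  | _ n ih =>
  by_cases hst : DStable A ↑(ends P)
  · exact ⟨P, hP, hn.le, rfl, hst⟩
  simp only [DStable, Finset.mem_coe, mem_ends, not_forall, not_not] at hst
  obtain ⟨x, ⟨p, hp, hx⟩, y, ⟨q, hq, hy⟩, hxy, hadj⟩ := hst
  have hpq : p ≠ q := by
    rintro rfl
    exact hxy (Option.some_injective _ (hx.symm.trans hy))
  obtain ⟨P', hP', hlt, hcov⟩ : ∃ P', IsPack A P' ∧ P'.card < P.card ∧ cover P' = cover P := by
    rcases hadj with h | h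
    · exact hP.exists_card_lt_of_arc hin hp hq hpq (by simp [hx, hy, h])
    · exact hP.exists_card_lt_of_arc hin hq hp hpq.symm (by simp [hx, hy, h])
  obtain ⟨R, hR, hRc, hRcov, hRst⟩ := ih _ (hn ▸ hlt) hP' rfl
  exact ⟨R, hR, by omega, hRcov.trans hcov, hRst⟩

end Packs

section Stable

variable {V : Type*} {A : V → V → Prop}

theorem DStable.mono {S T : Set V} (hT : DStable A T) (hST : S ⊆ T) : DStable A S :=
  fun u hu v hv => hT u (hST hu) v (hST hv)

theorem DStable.insert {S : Set V} {x : V} (hS : DStable A S)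
    (hx : ∀ s ∈ S, x ≠ s → ¬ DAdj A x s) : DStable A (insert x S) := by
  rintro a (rfl | ha) b (rfl | hb) hab
  · exact absurd rfl hab
  · exact hx b hb hab
  · exact fun h => hx a ha hab.symm h.symm
  · exact hS a ha b hb hab

variable {S : Finset V}

/-- An arc `s' → t` would make `s` and `s'` adjacent. -/
theorem not_dAdj_of_in_nbr (hin : InSemicomplete A) (hS : DStable A ↑S) {s t : V} (hs : s ∈ S)
    (hst : A s t) (hout : ∀ s' ∈ S, ¬ A t s') {s' : V} (hs' : s' ∈ S) (hne : s' ≠ s) :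
    ¬ DAdj A t s' := by
  rintro (h | h)
  exacts [hout s' hs' h, hS s' hs' s hs hne (hin t s' s h hst hne)]

variable [DecidableEq V]

theorem exists_dAdj_of_notMem (hS : DStable A ↑S)
    (hmax : ∀ T : Finset V, DStable A ↑T → T.card ≤ S.card) {v : V} (hv : v ∉ S) :
    ∃ s ∈ S, DAdj A v s := by
  by_contra! h
  have := hmax (insert v S) (by rw [Finset.coe_insert]; exact hS.insert fun s hs _ => h s hs)
  rw [Finset.card_insert_of_notMem hv] at this
  omega

/-- Otherwise `S - s + t₁ + t₂` would be a larger stable set. -/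
theorem dAdj_of_common_in_nbr (hin : InSemicomplete A) (hS : DStable A ↑S)
    (hmax : ∀ T : Finset V, DStable A ↑T → T.card ≤ S.card) {s t₁ t₂ : V} (hs : s ∈ S)
    (h₁ : t₁ ∉ S) (h₂ : t₂ ∉ S) (hne : t₁ ≠ t₂) (hst₁ : A s t₁) (hst₂ : A s t₂)
    (hout₁ : ∀ s' ∈ S, ¬ A t₁ s') (hout₂ : ∀ s' ∈ S, ¬ A t₂ s') : DAdj A t₁ t₂ := by
  by_contra hadj
  have hT : DStable A ↑(insert t₁ (insert t₂ (S.erase s))) := by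
    simp only [Finset.coe_insert, Finset.coe_erase]
    refine ((hS.mono Set.sdiff_subset).insert ?_).insert ?_
    · exact fun s' hs' _ => not_dAdj_of_in_nbr hin hS hs hst₂ hout₂ hs'.1 hs'.2
    · rintro s' (rfl | hs') -
      exacts [hadj, not_dAdj_of_in_nbr hin hS hs hst₁ hout₁ hs'.1 hs'.2]
  have := hmax _ hT
  rw [Finset.card_insert_of_notMem (by simp [hne, h₁]),
    Finset.card_insert_of_notMem (by simp [h₂]), Finset.card_erase_of_mem hs] at this
  have : 0 < S.card := Finset.card_pos.2 ⟨s, hs⟩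
  omega

theorem exists_preferred_nbr (hS : DStable A ↑S)
    (hmax : ∀ T : Finset V, DStable A ↑T → T.card ≤ S.card) :
    ∃ σ : V → V, ∀ t ∉ S, σ t ∈ S ∧ (A t (σ t) ∨ (A (σ t) t ∧ ∀ s ∈ S, ¬ A t s)) := by
  have : ∀ t, ∃ s, t ∉ S → s ∈ S ∧ (A t s ∨ (A s t ∧ ∀ s' ∈ S, ¬ A t s')) := by
    intro t
    by_cases ht : t ∈ S
    · exact ⟨t, fun h => absurd ht h⟩
    by_cases hout : ∃ s ∈ S, A t s
    · obtain ⟨s, hs, h⟩ := hout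
      exact ⟨s, fun _ => ⟨hs, .inl h⟩⟩
    push Not at hout
    obtain ⟨s, hs, h | h⟩ := exists_dAdj_of_notMem hS hmax ht
    · exact absurd h (hout s hs)
    · exact ⟨s, fun _ => ⟨hs, .inr ⟨h, hout⟩⟩⟩
  choose σ hσ using this
  exact ⟨σ, hσ⟩

end Stable

section Augment

variable {V : Type*} [DecidableEq V] {A : V → V → Prop} {S : Finset V} {Q F : Finset (List V)}

theorem IsPack.card_le_one_of_arcs_to (hin : InSemicomplete A) (hQ : IsPack A Q)
    (hends : DStable A ↑(ends Q)) {s : V} (hF : F ⊆ Q)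
    (harc : ∀ p ∈ F, ∀ t ∈ p.getLast?, A t s) : F.card ≤ 1 := by
  refine Finset.card_le_one.2 fun p hp q hq => ?_
  obtain ⟨tp, htp⟩ := (hQ.1 p (hF hp)).exists_getLast?
  obtain ⟨tq, htq⟩ := (hQ.1 q (hF hq)).exists_getLast?
  by_contra hpq
  have hne : tp ≠ tq := fun h => hpq (hQ.eq_of_getLast?_eq (hF hp) (hF hq) htp (h ▸ htq))
  exact hends tp (mem_ends.2 ⟨p, hF hp, htp⟩) tq (mem_ends.2 ⟨q, hF hq, htq⟩) hne
    (hin s tp tq (harc p hp tp htp) (harc q hq tq htq) hne)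

theorem IsPack.card_le_one_of_arcs_from (hin : InSemicomplete A) (hS : DStable A ↑S)
    (hmax : ∀ T : Finset V, DStable A ↑T → T.card ≤ S.card) (hQ : IsPack A Q)
    (hQS : Disjoint (cover Q) S) (hends : DStable A ↑(ends Q)) {s : V} (hs : s ∈ S)
    (hF : F ⊆ Q) (harc : ∀ q ∈ F, ∀ t ∈ q.getLast?, A s t ∧ ∀ s' ∈ S, ¬ A t s') :
    F.card ≤ 1 := by
  refine Finset.card_le_one.2 fun p hp q hq => ?_
  obtain ⟨tp, htp⟩ := (hQ.1 p (hF hp)).exists_getLast?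
  obtain ⟨tq, htq⟩ := (hQ.1 q (hF hq)).exists_getLast?
  have hnotMem : ∀ r ∈ F, ∀ t, r.getLast? = some t → t ∉ S := fun r hr t ht =>
    Finset.disjoint_left.1 hQS (mem_cover.2 ⟨r, hF hr, List.mem_of_getLast? ht⟩)
  by_contra hpq
  have hne : tp ≠ tq := fun h => hpq (hQ.eq_of_getLast?_eq (hF hp) (hF hq) htp (h ▸ htq))
  exact hends tp (mem_ends.2 ⟨p, hF hp, htp⟩) tq (mem_ends.2 ⟨q, hF hq, htq⟩) hne
    (dAdj_of_common_in_nbr hin hS hmax hs (hnotMem p hp tp htp) (hnotMem q hq tq htq) hne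
      (harc p hp tp htp).1 (harc q hq tq htq).1 (harc p hp tp htp).2 (harc q hq tq htq).2)

theorem exists_isPath_of_arcs_to (hin : InSemicomplete A) {s : V} (hF : IsPack A F)
    (hF1 : F.card ≤ 1) (hs : s ∉ cover F) (harc : ∀ p ∈ F, ∀ t ∈ p.getLast?, A t s) :
    ∃ a, IsPath A a ∧ a.getLast? = some s ∧ a.toFinset = insert s (cover F) := by
  obtain ⟨p, hFp⟩ := Finset.card_le_one_iff_subset_singleton.1 hF1
  rcases Finset.subset_singleton_iff.1 hFp with rfl | rfl
  · exact ⟨[s], isPath_singleton s, rfl, by simp [cover]⟩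
  rw [cover_singleton] at hs ⊢
  have hp := Finset.mem_singleton_self p
  obtain ⟨a, ha, hapath, hlast⟩ := (hF.1 p hp).exists_merge hin (isPath_singleton s)
    (fun x hx hxs => hs (by simp_all)) fun x hx y hy => by
      rw [List.getLast?_singleton, Option.mem_some_iff] at hy
      exact hy ▸ harc p hp x hx
  refine ⟨a, hapath, hlast, ?_⟩
  rw [List.toFinset_eq_of_perm _ _ ha, List.toFinset_append, Finset.union_comm]
  rfl

theorem IsPath.exists_merge_of_arcs_from (hin : InSemicomplete A) {a : List V} {s : V}
    (ha : IsPath A a) (hlast : a.getLast? = some s) (hF : IsPack A F) (hF1 : F.card ≤ 1)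
    (hdisj : Disjoint a.toFinset (cover F)) (harc : ∀ q ∈ F, ∀ t ∈ q.getLast?, A s t) :
    ∃ m, IsPath A m ∧ m.toFinset = a.toFinset ∪ cover F := by
  obtain ⟨q, hFq⟩ := Finset.card_le_one_iff_subset_singleton.1 hF1
  rcases Finset.subset_singleton_iff.1 hFq with rfl | rfl
  · exact ⟨a, ha, by simp [cover]⟩
  rw [cover_singleton] at hdisj ⊢
  have hq := Finset.mem_singleton_self q
  obtain ⟨m, hm, hmpath, -⟩ := ha.exists_merge hin (hF.1 q hq)
    (fun x hx hxq => Finset.disjoint_left.1 hdisj (List.mem_toFinset.2 hx)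
      (List.mem_toFinset.2 hxq)) fun x hx y hy => by
      rw [hlast, Option.mem_some_iff] at hx
      exact hx ▸ harc q hq y hy
  exact ⟨m, hmpath, by rw [List.toFinset_eq_of_perm _ _ hm, List.toFinset_append]⟩

def fibre (σ : V → V) (Q : Finset (List V)) (s : V) : Finset (List V) :=
  Q.filter fun q => ∀ t ∈ q.getLast?, σ t = s

theorem fibre_subset {σ : V → V} {s : V} : fibre σ Q s ⊆ Q :=
  Finset.filter_subset _ _

theorem IsPack.pairwiseDisjoint_insert_cover_fibre (hQ : IsPack A Q)
    (hQS : Disjoint (cover Q) S) (σ : V → V) :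
    (S : Set V).PairwiseDisjoint fun s => insert s (cover (fibre σ Q s)) := by
  intro s hs s' hs' hne
  have hnot : ∀ s ∈ S, ∀ s', s ∉ cover (fibre σ Q s') := fun s hs s' h =>
    Finset.disjoint_right.1 hQS hs (cover_mono fibre_subset h)
  have hFF : Disjoint (fibre σ Q s) (fibre σ Q s') := by
    refine Finset.disjoint_filter.2 fun q hq h h' => ?_
    obtain ⟨t, ht⟩ := (hQ.1 q hq).exists_getLast?
    exact hne ((h t ht).symm.trans (h' t ht))
  simp only [Function.onFun, Finset.disjoint_insert_left, Finset.disjoint_insert_right,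
    Finset.mem_insert, not_or]
  exact ⟨⟨hne.symm, hnot s' hs' s⟩, hnot s hs s',
    hQ.disjoint_cover fibre_subset fibre_subset hFF⟩

theorem IsPack.biUnion_insert_cover_fibre (hQ : IsPack A Q) {σ : V → V} {W : Finset V}
    (hσW : ∀ t ∈ ends Q, σ t ∈ W) :
    W.biUnion (fun s => insert s (cover (fibre σ Q s))) = W ∪ cover Q := by
  ext x
  simp only [Finset.mem_biUnion, Finset.mem_union, Finset.mem_insert]
  constructor
  · rintro ⟨s, hs, rfl | hx⟩
    exacts [.inl hs, .inr (cover_mono fibre_subset hx)]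
  · rintro (hx | hx)
    · exact ⟨x, hx, .inl rfl⟩
    obtain ⟨q, hq, hxq⟩ := mem_cover.1 hx
    obtain ⟨t, ht⟩ := (hQ.1 q hq).exists_getLast?
    refine ⟨σ t, hσW t (mem_ends.2 ⟨q, hq, ht⟩), .inr (mem_cover.2 ⟨q, ?_, hxq⟩)⟩
    exact Finset.mem_filter.2 ⟨hq, fun t' ht' => by rw [Option.mem_unique ht' ht]⟩

/-- The path ending with an arc into `s` (if any) is extended by `s`, and the path whose end
is entered from `s` (if any) is then merged into it. -/
theorem IsPack.exists_isPath_fibre (hin : InSemicomplete A) (hS : DStable A ↑S)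
    (hmax : ∀ T : Finset V, DStable A ↑T → T.card ≤ S.card) (hQ : IsPack A Q)
    (hQS : Disjoint (cover Q) S) (hends : DStable A ↑(ends Q)) {σ : V → V}
    (hσ : ∀ t ∉ S, σ t ∈ S ∧ (A t (σ t) ∨ (A (σ t) t ∧ ∀ s ∈ S, ¬ A t s)))
    {s : V} (hs : s ∈ S) :
    ∃ m, IsPath A m ∧ m.toFinset = insert s (cover (fibre σ Q s)) := by
  set Fto := (fibre σ Q s).filter fun q => ∀ t ∈ q.getLast?, A t s
  set Ffrom := (fibre σ Q s).filter fun q => ¬ ∀ t ∈ q.getLast?, A t s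
  have hto : Fto ⊆ Q := (Finset.filter_subset _ _).trans fibre_subset
  have hfrom : Ffrom ⊆ Q := (Finset.filter_subset _ _).trans fibre_subset
  have hs_cover : ∀ G ⊆ Q, s ∉ cover G := fun G hG hsG =>
    Finset.disjoint_right.1 hQS hs (cover_mono hG hsG)
  have harc : ∀ q ∈ Ffrom, ∀ t ∈ q.getLast?, A s t ∧ ∀ s' ∈ S, ¬ A t s' := by
    intro q hq t ht
    simp only [Ffrom, fibre, Finset.mem_filter] at hq
    have hts : ¬ A t s := fun h => hq.2 fun t' ht' => Option.mem_unique ht ht' ▸ h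
    have htS : t ∉ S := Finset.disjoint_left.1 hQS
      (mem_cover.2 ⟨q, hq.1.1, List.mem_of_getLast? ht⟩)
    rw [← hq.1.2 t ht]
    exact (hσ t htS).2.resolve_left (hq.1.2 t ht ▸ hts)
  obtain ⟨a, ha, hlast, hat⟩ := exists_isPath_of_arcs_to hin (hQ.mono hto)
    (hQ.card_le_one_of_arcs_to hin hends hto fun p hp => (Finset.mem_filter.1 hp).2)
    (hs_cover _ hto) fun p hp => (Finset.mem_filter.1 hp).2
  have hdisj : Disjoint a.toFinset (cover Ffrom) := by
    rw [hat, Finset.disjoint_insert_left]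
    exact ⟨hs_cover _ hfrom,
      hQ.disjoint_cover hto hfrom (Finset.disjoint_filter_filter_not _ _ _)⟩
  obtain ⟨m, hm, hmt⟩ := ha.exists_merge_of_arcs_from hin hlast (hQ.mono hfrom)
    (hQ.card_le_one_of_arcs_from hin hS hmax hQS hends hs hfrom harc) hdisj
    fun q hq t ht => (harc q hq t ht).1
  refine ⟨m, hm, ?_⟩
  rw [hmt, hat, Finset.insert_union, ← cover_union, Finset.filter_union_filter_not_eq]

/-- Each path of `Q` is attached through its end `t` to a neighbour `σ t ∈ S` (paths attached to
the same vertex are merged), and further vertices of `S` are added as one-vertex paths until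
there are `k` paths. -/
theorem IsPack.exists_kPack_weight_eq_add (hin : InSemicomplete A) (hS : DStable A ↑S)
    (hmax : ∀ T : Finset V, DStable A ↑T → T.card ≤ S.card) (hQ : IsPack A Q)
    (hQS : Disjoint (cover Q) S) (hends : DStable A ↑(ends Q)) {k : ℕ} (hQk : Q.card ≤ k)
    (hkS : k ≤ S.card) : ∃ R, IsKPack A k R ∧ weight R = weight Q + k := by
  obtain ⟨σ, hσ⟩ := exists_preferred_nbr hS hmax
  have hσends : ∀ t ∈ ends Q, σ t ∈ S := fun t ht => by
    obtain ⟨q, hq, hqt⟩ := mem_ends.1 ht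
    exact (hσ t (Finset.disjoint_left.1 hQS
      (mem_cover.2 ⟨q, hq, List.mem_of_getLast? hqt⟩))).1
  obtain ⟨W, hσW, hWS, hWk⟩ := Finset.exists_subsuperset_card_eq
    (Finset.image_subset_iff.2 hσends) (Finset.card_image_le.trans (hQ.card_ends ▸ hQk)) hkS
  choose! m hm hmF using fun s (hs : s ∈ S) =>
    hQ.exists_isPath_fibre hin hS hmax hQS hends hσ hs
  obtain ⟨hR, hRcard⟩ := isPack_image (fun s hs => hm s (hWS hs))
    (((hQ.pairwiseDisjoint_insert_cover_fibre hQS σ).subset (Finset.coe_subset.2 hWS)).mono_on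
      fun s hs => (hmF s (hWS hs)).le)
  have hcover : cover (W.image m) = W ∪ cover Q := by
    rw [cover, Finset.image_biUnion, Finset.biUnion_congr rfl fun s hs => hmF s (hWS hs),
      hQ.biUnion_insert_cover_fibre fun t ht => hσW (Finset.mem_image_of_mem σ ht)]
  refine ⟨W.image m, ⟨hRcard.trans_le hWk.le, hR⟩, ?_⟩
  rw [hR.weight_eq_card_cover, hQ.weight_eq_card_cover, hcover,
    Finset.card_union_of_disjoint (Finset.disjoint_of_subset_left hWS hQS.symm), hWk, add_comm]

end Augment

section Extremal

theorem IsColoring.chik_le {V : Type*} {A : V → V → Prop} {k : ℕ} {C : Finset (Finset V)}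
    (hC : IsColoring A C) : chik A k ≤ cnorm k C :=
  Nat.sInf_le ⟨C, hC, rfl⟩

variable {V : Type*} [Fintype V] [DecidableEq V] {A : V → V → Prop} {k : ℕ}

theorem bddAbove_weight (A : V → V → Prop) (k : ℕ) :
    BddAbove {n | ∃ P : Finset (List V), IsKPack A k P ∧ weight P = n} := by
  refine ⟨Fintype.card V, ?_⟩
  rintro n ⟨P, hP, rfl⟩
  rw [hP.isPack.weight_eq_card_cover]
  exact Finset.card_le_univ _

theorem IsKPack.weight_le_lamk {P : Finset (List V)} (hP : IsKPack A k P) :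
    weight P ≤ lamk A k :=
  le_csSup (bddAbove_weight A k) ⟨P, hP, rfl⟩

theorem exists_weight_eq_lamk (A : V → V → Prop) (k : ℕ) :
    ∃ P : Finset (List V), IsKPack A k P ∧ weight P = lamk A k := by
  have hne : {n | ∃ P : Finset (List V), IsKPack A k P ∧ weight P = n}.Nonempty :=
    ⟨0, ∅, ⟨by simp, by simp, by simp [PDisjoint]⟩, rfl⟩
  exact Nat.sSup_mem hne (bddAbove_weight A k)

theorem exists_isColoring_cnorm_le_card (A : V → V → Prop) (k : ℕ) :
    ∃ C : Finset (Finset V), IsColoring A C ∧ cnorm k C ≤ Fintype.card V := by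
  refine ⟨Finset.univ.image fun v => {v}, ⟨?_, ?_, ?_, fun v => ⟨{v}, by simp⟩⟩, ?_⟩
  · simp only [Finset.mem_image, Finset.mem_univ, true_and]
    rintro _ ⟨v, rfl⟩ a ha b hb hab
    simp_all
  · simp
  · simp only [Finset.mem_image, Finset.mem_univ, true_and]
    rintro _ ⟨v, rfl⟩ _ ⟨w, rfl⟩ hvw
    simpa using hvw
  · calc cnorm k (Finset.univ.image fun v => ({v} : Finset V))
        ≤ ∑ c ∈ Finset.univ.image fun v => ({v} : Finset V), c.card :=
          Finset.sum_le_sum fun c _ => min_le_left _ _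
      _ = Fintype.card V := by
          rw [Finset.sum_image fun v _ w _ h => Finset.singleton_injective h]
          simp

theorem chik_le_card (A : V → V → Prop) (k : ℕ) : chik A k ≤ Fintype.card V := by
  obtain ⟨C, hC, hCk⟩ := exists_isColoring_cnorm_le_card A k
  exact hC.chik_le.trans hCk

theorem exists_cnorm_eq_chik (A : V → V → Prop) (k : ℕ) :
    ∃ C : Finset (Finset V), IsColoring A C ∧ cnorm k C = chik A k := by
  obtain ⟨C, hC, -⟩ := exists_isColoring_cnorm_le_card A k
  have hne : {n | ∃ C : Finset (Finset V), IsColoring A C ∧ cnorm k C = n}.Nonempty :=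
    ⟨_, C, hC, rfl⟩
  exact Nat.sInf_mem hne

theorem exists_max_dStable (A : V → V → Prop) :
    ∃ S : Finset V, DStable A ↑S ∧ ∀ T : Finset V, DStable A ↑T → T.card ≤ S.card := by
  obtain ⟨S, hS, hmax⟩ := Finset.exists_max_image
    (Finset.univ.powerset.filter fun T : Finset V => DStable A ↑T) Finset.card
    ⟨∅, by simp [DStable]⟩
  exact ⟨S, (Finset.mem_filter.1 hS).2, fun T hT => hmax T (by simpa using hT)⟩

/-- Merging paths with adjacent ends keeps the pack optimal, and it still has `k` paths, as
otherwise `[u]` could be added. -/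
theorem IsKPack.exists_dStable_card_eq (hin : InSemicomplete A) {P : Finset (List V)}
    (hP : IsKPack A k P) (hPw : weight P = lamk A k) {u : V} (hu : u ∉ cover P) :
    ∃ T : Finset V, DStable A ↑T ∧ T.card = k := by
  obtain ⟨P₁, hP₁, hP₁c, hP₁cov, hP₁st⟩ := hP.isPack.exists_dStable_ends hin
  refine ⟨ends P₁, hP₁st, hP₁.card_ends.trans ?_⟩
  by_contra hne
  have hu₁ : ∀ q ∈ P₁, u ∉ q := fun q hq huq => hu (hP₁cov ▸ mem_cover.2 ⟨q, hq, huq⟩)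
  have hpack : IsKPack A k (insert [u] P₁) :=
    ⟨(Finset.card_insert_le _ _).trans (by have := hP₁c.trans hP.1; omega),
      hP₁.insert_of_disjoint (isPath_singleton u) fun q hq _ => by simpa using hu₁ q hq⟩
  have := hpack.weight_le_lamk
  rw [hpack.isPack.weight_eq_card_cover, cover_insert, Finset.card_union_of_disjoint
    (by simpa [hP₁cov] using hu), ← hPw, hP.isPack.weight_eq_card_cover, hP₁cov] at this
  simp at this

end Extremal

section Restrict

variable {V W : Type*} [DecidableEq V] {A : V → V → Prop} {k : ℕ} {f : W → V}

theorem IsKPack.image_map (hf : Function.Injective f) {P : Finset (List W)}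
    (hP : IsKPack (fun a b => A (f a) (f b)) k P) : IsKPack A k (P.image (List.map f)) := by
  refine ⟨Finset.card_image_le.trans hP.1, fun p hp => ?_, fun p hp q hq hpq x hxp hxq => ?_⟩
  · obtain ⟨p, hp', rfl⟩ := Finset.mem_image.1 hp
    obtain ⟨hne, hnd, hc⟩ := hP.2.1 p hp'
    exact ⟨by simpa using hne, hnd.map hf, (List.isChain_map f).2 hc⟩
  · obtain ⟨p, hp', rfl⟩ := Finset.mem_image.1 hp
    obtain ⟨q, hq', rfl⟩ := Finset.mem_image.1 hq
    obtain ⟨a, ha, rfl⟩ := List.mem_map.1 hxp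
    obtain ⟨b, hb, hba⟩ := List.mem_map.1 hxq
    exact hP.2.2 p hp' q hq' (fun h => hpq (h ▸ rfl)) a ha (hf hba ▸ hb)

theorem weight_image_map (hf : Function.Injective f) (P : Finset (List W)) :
    weight (P.image (List.map f)) = weight P := by
  rw [weight, Finset.sum_image fun p _ q _ h => List.map_injective_iff.2 hf h, weight]
  simp

end Restrict

section Induced

variable {V : Type*} [Fintype V] [DecidableEq V] {A : V → V → Prop} {k : ℕ} {S : Finset V}

abbrev deleteVerts (A : V → V → Prop) (S : Finset V) : {v // v ∉ S} → {v // v ∉ S} → Prop :=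
  fun a b => A a b

theorem chik_le_add_chik_compl (hS : DStable A ↑S) (hSne : S.Nonempty) :
    chik A k ≤ k + chik (deleteVerts A S) k := by
  obtain ⟨C', ⟨hst, hne, hdisj, hcov⟩, hC'⟩ := exists_cnorm_eq_chik (deleteVerts A S) k
  set e := Function.Embedding.subtype fun v => v ∉ S
  have hcompl : ∀ c ∈ C', ∀ x ∈ c.map e, x ∉ S := fun c _ x hx => by
    obtain ⟨y, -, rfl⟩ := Finset.mem_map.1 hx
    exact y.2
  have hSC : S ∉ C'.image (Finset.map e) := fun h => by
    obtain ⟨c, hc, hcS⟩ := Finset.mem_image.1 h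
    obtain ⟨s, hs⟩ := hSne
    exact hcompl c hc s (hcS.symm ▸ hs) hs
  have hC : IsColoring A (insert S (C'.image (Finset.map e))) := by
    simp only [IsColoring, Finset.mem_insert, Finset.mem_image]
    refine ⟨?_, ?_, ?_, fun v => ?_⟩
    · rintro _ (rfl | ⟨c, hc, rfl⟩)
      · exact hS
      rintro _ hx _ hy hxy
      obtain ⟨x, hx', rfl⟩ := Finset.mem_map.1 hx
      obtain ⟨y, hy', rfl⟩ := Finset.mem_map.1 hy
      exact hst c hc x hx' y hy' fun h => hxy (h ▸ rfl)
    · rintro _ (rfl | ⟨c, hc, rfl⟩)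
      exacts [hSne, (hne c hc).map]
    · rintro _ (rfl | ⟨c, hc, rfl⟩) _ (rfl | ⟨d, hd, rfl⟩) hcd
      · exact absurd rfl hcd
      · exact Finset.disjoint_right.2 (hcompl d hd)
      · exact Finset.disjoint_left.2 (hcompl c hc)
      · exact (Finset.disjoint_map e).2 (hdisj c hc d hd fun h => hcd (h ▸ rfl))
    · by_cases hv : v ∈ S
      · exact ⟨S, .inl rfl, hv⟩
      obtain ⟨c, hc, hvc⟩ := hcov ⟨v, hv⟩
      exact ⟨c.map e, .inr ⟨c, hc, rfl⟩, Finset.mem_map_of_mem e hvc⟩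
  calc chik A k ≤ cnorm k (insert S (C'.image (Finset.map e))) := hC.chik_le
    _ = min S.card k + cnorm k C' := by
      rw [cnorm, Finset.sum_insert hSC,
        Finset.sum_image fun c _ d _ h => Finset.map_injective e h]
      simp [cnorm]
    _ ≤ k + chik (deleteVerts A S) k := by
      rw [hC']
      gcongr
      exact min_le_right _ _

theorem lamk_compl_add_le (hin : InSemicomplete A) (hS : DStable A ↑S)
    (hmax : ∀ T : Finset V, DStable A ↑T → T.card ≤ S.card) (hkS : k ≤ S.card) :
    lamk (deleteVerts A S) k + k ≤ lamk A k := by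
  obtain ⟨P, hP, hPw⟩ := exists_weight_eq_lamk (deleteVerts A S) k
  set Q₀ := P.image (List.map Subtype.val)
  have hQ₀ : IsKPack A k Q₀ := hP.image_map Subtype.val_injective
  have hQ₀S : Disjoint (cover Q₀) S := by
    refine Finset.disjoint_left.2 fun x hx => ?_
    obtain ⟨q, hq, hxq⟩ := mem_cover.1 hx
    obtain ⟨p, -, rfl⟩ := Finset.mem_image.1 hq
    obtain ⟨y, -, rfl⟩ := List.mem_map.1 hxq
    exact y.2
  obtain ⟨Q, hQ, hQc, hQcov, hQst⟩ := hQ₀.isPack.exists_dStable_ends hin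
  obtain ⟨R, hR, hRw⟩ := hQ.exists_kPack_weight_eq_add hin hS hmax (hQcov ▸ hQ₀S) hQst
    (hQc.trans hQ₀.1) hkS
  calc lamk (deleteVerts A S) k + k = weight Q + k := by
        rw [← hPw, ← weight_image_map Subtype.val_injective, hQ.weight_eq_card_cover,
          hQ₀.isPack.weight_eq_card_cover, hQcov]
    _ = weight R := hRw.symm
    _ ≤ lamk A k := hR.weight_le_lamk

end Induced

variable {V : Type*} [Fintype V] [DecidableEq V]

theorem stmt19_general (A : V → V → Prop)
    (hin : InSemicomplete A) (k : ℕ) :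
    chik A k ≤ lamk A k := by
  induction hn : Fintype.card V using Nat.strong_induction_on generalizing V with
  | _ n ih =>
  obtain ⟨P, hP, hPw⟩ := exists_weight_eq_lamk A k
  by_cases hcov : ∀ u, u ∈ cover P
  · calc chik A k ≤ Fintype.card V := chik_le_card A k
      _ = lamk A k := by
        rw [← hPw, hP.isPack.weight_eq_card_cover, Finset.eq_univ_of_forall hcov,
          Finset.card_univ]
  push Not at hcov
  obtain ⟨u, hu⟩ := hcov
  obtain ⟨T, hT, hTk⟩ := hP.exists_dStable_card_eq hin hPw hu
  obtain ⟨S, hS, hmax⟩ := exists_max_dStable A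
  obtain ⟨s, hs⟩ : S.Nonempty := Finset.card_pos.1 (hmax {u} (by simp [DStable]))
  have hlt : Fintype.card {v // v ∉ S} < n := hn ▸ Fintype.card_subtype_lt (not_not.2 hs)
  calc chik A k ≤ k + chik (deleteVerts A S) k := chik_le_add_chik_compl hS ⟨s, hs⟩
    _ ≤ k + lamk (deleteVerts A S) k :=
      Nat.add_le_add_left (ih _ hlt _ (hin.comap Subtype.val_injective) rfl) k
    _ ≤ lamk A k := by rw [add_comm]; exact lamk_compl_add_le hin hS hmax (hTk ▸ hmax T hT)

/-- The dual Linial Conjecture for in-semicomplete digraphs: χ_k(D) ≤ λ_k(D). -/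
theorem stmt19 (A : V → V → Prop) (hirr : Irreflexive A)
    (hin : InSemicomplete A) (k : ℕ) (hk : 0 < k) :
    chik A k ≤ lamk A k :=
  stmt19_general A hin k

end DigraphPaper
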